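/- Let Γ_1 and Γ_2 be simple graphs with maximum degrees Δ_1 and Δ_2, and let s be an integer with max{Δ_1,Δ_2} ≤ s ≤ Δ_1+Δ_2+k. If both Γ_1 and Γ_2 contain a defensive k-alliance, then a_{k−s}^d(Γ_1×Γ_2) ≤ min{ a_k^d(Γ_1), a_k^d(Γ_2) }. -/

import Mathlib

open Finset

/-- The number of neighbors that the vertex `v` has inside the set `S`. -/
def degIn {V : Type*} [Fintype V] [DecidableEq V] (G : SimpleGraph V) [DecidableRel G.Adj]
    (S : Finset V) (v : V) : ℕ :=
  (S.filter fun u => G.Adj v u).card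

/-- `S` is a defensive `k`-alliance: `S` is nonempty and every vertex of `S` has at least
`k` more neighbors inside `S` than outside. -/
def IsDefensiveAlliance {V : Type*} [Fintype V] [DecidableEq V] (G : SimpleGraph V)
    [DecidableRel G.Adj] (k : ℤ) (S : Finset V) : Prop :=
  S.Nonempty ∧ ∀ v ∈ S, (degIn G Sᶜ v : ℤ) + k ≤ (degIn G S v : ℤ)

/-- `S` is a dominating set: every vertex outside `S` has a neighbor in `S`. -/
def IsDominatingSet {V : Type*} [Fintype V] [DecidableEq V] (G : SimpleGraph V)
    (S : Finset V) : Prop :=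
  ∀ v ∉ S, ∃ u ∈ S, G.Adj v u

/-- A global defensive `k`-alliance is a defensive `k`-alliance which is a dominating set. -/
def IsGlobalDefensiveAlliance {V : Type*} [Fintype V] [DecidableEq V] (G : SimpleGraph V)
    [DecidableRel G.Adj] (k : ℤ) (S : Finset V) : Prop :=
  IsDefensiveAlliance G k S ∧ IsDominatingSet G S

/-- The defensive `k`-alliance number: the minimum cardinality of a defensive `k`-alliance. -/
noncomputable def defAllianceNum {V : Type*} [Fintype V] [DecidableEq V] (G : SimpleGraph V)
    [DecidableRel G.Adj] (k : ℤ) : ℕ :=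
  sInf {s : ℕ | ∃ S : Finset V, IsDefensiveAlliance G k S ∧ S.card = s}

/-- The global defensive `k`-alliance number. -/
noncomputable def globalDefAllianceNum {V : Type*} [Fintype V] [DecidableEq V] (G : SimpleGraph V)
    [DecidableRel G.Adj] (k : ℤ) : ℕ :=
  sInf {s : ℕ | ∃ S : Finset V, IsGlobalDefensiveAlliance G k S ∧ S.card = s}

/-- A partition of the vertex set all whose parts are defensive `k`-alliances. -/
def IsDefAlliancePartition {V : Type*} [Fintype V] [DecidableEq V] (G : SimpleGraph V)
    [DecidableRel G.Adj] (k : ℤ) (P : Finpartition (univ : Finset V)) : Prop :=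
  ∀ S ∈ P.parts, IsDefensiveAlliance G k S

/-- A partition of the vertex set all whose parts are global defensive `k`-alliances. -/
def IsGlobalDefAlliancePartition {V : Type*} [Fintype V] [DecidableEq V] (G : SimpleGraph V)
    [DecidableRel G.Adj] (k : ℤ) (P : Finpartition (univ : Finset V)) : Prop :=
  ∀ S ∈ P.parts, IsGlobalDefensiveAlliance G k S

/-- The defensive `k`-alliance partition number `ψₖᵈ`. -/
noncomputable def defPartitionNum {V : Type*} [Fintype V] [DecidableEq V] (G : SimpleGraph V)
    [DecidableRel G.Adj] (k : ℤ) : ℕ :=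
  sSup {r : ℕ | ∃ P : Finpartition (univ : Finset V),
    IsDefAlliancePartition G k P ∧ P.parts.card = r}

/-- The global defensive `k`-alliance partition number `ψₖᵍᵈ`. -/
noncomputable def globalDefPartitionNum {V : Type*} [Fintype V] [DecidableEq V]
    (G : SimpleGraph V) [DecidableRel G.Adj] (k : ℤ) : ℕ :=
  sSup {r : ℕ | ∃ P : Finpartition (univ : Finset V),
    IsGlobalDefAlliancePartition G k P ∧ P.parts.card = r}

instance {α β : Type*} [DecidableEq α] [DecidableEq β] (G : SimpleGraph α) (H : SimpleGraph β)
    [DecidableRel G.Adj] [DecidableRel H.Adj] : DecidableRel (G.boxProd H).Adj := fun _ _ =>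
  decidable_of_iff' _ SimpleGraph.boxProd_adj

/-!
A defensive `k`-alliance `S` of `Γ₁` gives the copy `S × {b}` in `Γ₁ × Γ₂`. A vertex `(v, b)` of
the copy keeps its neighbours inside and outside `S` (inside and outside the copy) and gains
`deg_{Γ₂} b ≤ Δ₂ ≤ s` new neighbours, all outside the copy, so the copy is a defensive
`(k - s)`-alliance of the same size. Symmetrically for `Γ₂`.
-/

open SimpleGraph

section Alliance

variable {V : Type*} [Fintype V] [DecidableEq V] (G : SimpleGraph V) [DecidableRel G.Adj]

lemma degIn_add_degIn_compl (S : Finset V) (v : V) :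
    degIn G S v + degIn G Sᶜ v = G.degree v := by
  rw [degIn, degIn, ← card_union_of_disjoint (disjoint_filter_filter disjoint_compl_right),
    ← filter_union, union_compl, degree, neighborFinset_eq_filter]

variable {G}

lemma IsDefensiveAlliance.mono {k k' : ℤ} {S : Finset V} (hS : IsDefensiveAlliance G k S)
    (hk : k' ≤ k) : IsDefensiveAlliance G k' S :=
  ⟨hS.1, fun v hv => (add_le_add_right hk _).trans (hS.2 v hv)⟩

lemma defAllianceNum_le_card {k : ℤ} {S : Finset V} (hS : IsDefensiveAlliance G k S) :
    defAllianceNum G k ≤ S.card :=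
  Nat.sInf_le ⟨S, hS, rfl⟩

lemma exists_card_eq_defAllianceNum {k : ℤ} (h : ∃ S, IsDefensiveAlliance G k S) :
    ∃ S, IsDefensiveAlliance G k S ∧ S.card = defAllianceNum G k := by
  obtain ⟨S, hS⟩ := h
  exact Nat.sInf_mem (s := {n | ∃ S, IsDefensiveAlliance G k S ∧ S.card = n})
    ⟨S.card, S, hS, rfl⟩

end Alliance

section BoxProd

variable {α β : Type*} [Fintype α] [Fintype β] [DecidableEq α] [DecidableEq β]
  {G : SimpleGraph α} {H : SimpleGraph β} [DecidableRel G.Adj] [DecidableRel H.Adj]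

lemma degIn_boxProd_product_singleton (S : Finset α) (v : α) (b : β) :
    degIn (G □ H) (S ×ˢ {b}) (v, b) = degIn G S v := by
  simp only [degIn, product_singleton, filter_map, card_map]
  congr 1
  exact filter_congr fun u _ => boxProd_adj_left

lemma degIn_boxProd_singleton_product (T : Finset β) (a : α) (w : β) :
    degIn (G □ H) ({a} ×ˢ T) (a, w) = degIn H T w := by
  simp only [degIn, singleton_product, filter_map, card_map]
  congr 1
  exact filter_congr fun u _ => boxProd_adj_right

lemma IsDefensiveAlliance.boxProd_product_singleton {k : ℤ} {S : Finset α}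
    (hS : IsDefensiveAlliance G k S) (b : β) :
    IsDefensiveAlliance (G □ H) (k - H.maxDegree) (S ×ˢ {b}) := by
  refine ⟨hS.1.product (singleton_nonempty b), ?_⟩
  rintro ⟨v, c⟩ hv
  simp only [mem_product, mem_singleton] at hv
  obtain ⟨hv, rfl⟩ := hv
  have hcopy := degIn_boxProd_product_singleton (G := G) (H := H) S v c
  have hsplit : degIn (G □ H) (S ×ˢ {c}) (v, c) + degIn (G □ H) (S ×ˢ {c})ᶜ (v, c) =
      G.degree v + H.degree c := by
    rw [degIn_add_degIn_compl, degree_boxProd]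
  have hsplitG := degIn_add_degIn_compl G S v
  have hdeg := H.degree_le_maxDegree c
  have := hS.2 v hv
  omega

lemma IsDefensiveAlliance.boxProd_singleton_product {k : ℤ} {T : Finset β}
    (hT : IsDefensiveAlliance H k T) (a : α) :
    IsDefensiveAlliance (G □ H) (k - G.maxDegree) ({a} ×ˢ T) := by
  refine ⟨(singleton_nonempty a).product hT.1, ?_⟩
  rintro ⟨c, w⟩ hw
  simp only [mem_product, mem_singleton] at hw
  obtain ⟨rfl, hw⟩ := hw
  have hcopy := degIn_boxProd_singleton_product (G := G) (H := H) T c w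
  have hsplit : degIn (G □ H) ({c} ×ˢ T) (c, w) + degIn (G □ H) ({c} ×ˢ T)ᶜ (c, w) =
      G.degree c + H.degree w := by
    rw [degIn_add_degIn_compl, degree_boxProd]
  have hsplitH := degIn_add_degIn_compl H T w
  have hdeg := G.degree_le_maxDegree c
  have := hT.2 w hw
  omega

lemma defAllianceNum_boxProd_le_left [Nonempty β] {k s : ℤ} (hs : (H.maxDegree : ℤ) ≤ s)
    (h : ∃ S, IsDefensiveAlliance G k S) :
    defAllianceNum (G □ H) (k - s) ≤ defAllianceNum G k := by
  obtain ⟨S, hS, hcard⟩ := exists_card_eq_defAllianceNum h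
  obtain ⟨b⟩ := ‹Nonempty β›
  calc defAllianceNum (G □ H) (k - s)
      ≤ (S ×ˢ {b}).card := defAllianceNum_le_card
        ((hS.boxProd_product_singleton b).mono (by omega))
    _ = defAllianceNum G k := by rw [card_product, card_singleton, mul_one, hcard]

lemma defAllianceNum_boxProd_le_right [Nonempty α] {k s : ℤ} (hs : (G.maxDegree : ℤ) ≤ s)
    (h : ∃ T, IsDefensiveAlliance H k T) :
    defAllianceNum (G □ H) (k - s) ≤ defAllianceNum H k := by
  obtain ⟨T, hT, hcard⟩ := exists_card_eq_defAllianceNum h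
  obtain ⟨a⟩ := ‹Nonempty α›
  calc defAllianceNum (G □ H) (k - s)
      ≤ ({a} ×ˢ T).card := defAllianceNum_le_card
        ((hT.boxProd_singleton_product a).mono (by omega))
    _ = defAllianceNum H k := by rw [card_product, card_singleton, one_mul, hcard]

end BoxProd

theorem statement15_general {α β : Type*} [Fintype α] [Fintype β] [DecidableEq α] [DecidableEq β]
    (G : SimpleGraph α) (H : SimpleGraph β) [DecidableRel G.Adj] [DecidableRel H.Adj]
    (k s : ℤ)
    (hs₁ : (max G.maxDegree H.maxDegree : ℤ) ≤ s)
    (h₁ : ∃ S : Finset α, IsDefensiveAlliance G k S)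
    (h₂ : ∃ S : Finset β, IsDefensiveAlliance H k S) :
    defAllianceNum (G.boxProd H) (k - s) ≤ min (defAllianceNum G k) (defAllianceNum H k) := by
  have : Nonempty α := let ⟨_, hS⟩ := h₁; hS.1.to_type
  have : Nonempty β := let ⟨_, hS⟩ := h₂; hS.1.to_type
  have hG : (G.maxDegree : ℤ) ≤ s := le_trans (by exact_mod_cast le_max_left _ _) hs₁
  have hH : (H.maxDegree : ℤ) ≤ s := le_trans (by exact_mod_cast le_max_right _ _) hs₁
  exact le_min (defAllianceNum_boxProd_le_left hH h₁) (defAllianceNum_boxProd_le_right hG h₂)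

/-- For `max{Δ₁,Δ₂} ≤ s ≤ Δ₁+Δ₂+k`, if both `Γ₁` and `Γ₂` contain a defensive `k`-alliance,
then `a_{k-s}ᵈ(Γ₁×Γ₂) ≤ min{a_kᵈ(Γ₁), a_kᵈ(Γ₂)}`. -/
theorem statement15 {α β : Type*} [Fintype α] [Fintype β] [DecidableEq α] [DecidableEq β]
    (G : SimpleGraph α) (H : SimpleGraph β) [DecidableRel G.Adj] [DecidableRel H.Adj]
    (k s : ℤ)
    (hs₁ : (max G.maxDegree H.maxDegree : ℤ) ≤ s)
    (hs₂ : s ≤ (G.maxDegree : ℤ) + (H.maxDegree : ℤ) + k)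
    (h₁ : ∃ S : Finset α, IsDefensiveAlliance G k S)
    (h₂ : ∃ S : Finset β, IsDefensiveAlliance H k S) :
    defAllianceNum (G.boxProd H) (k - s) ≤ min (defAllianceNum G k) (defAllianceNum H k) :=
  statement15_general G H k s hs₁ h₁ h₂
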